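/- arXiv:2501.16941 — 4 statements merged into one kernel-verified Lean document; each statement's English description precedes it below -/
import Mathlib

section
/- Let G be a finite group, H ≤ G a subgroup, and let N₀, N₁ be normal subgroups of G that centralize each other elementwise and have coprime orders (e.g., the p-part and p'-part of a normal nilpotent subgroup N). Then H N₀ ∩ H N₁ = H. -/
open Pointwise in
/-- If `N₀, N₁ ⊴ G` centralize each other elementwise and have coprime orders,
then `H N₀ ∩ H N₁ = H` for any subgroup `H ≤ G`. -/
theorem stmt_1 {G : Type*} [Group G] [Finite G] (H N₀ N₁ : Subgroup G)
    [N₀.Normal] [N₁.Normal]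
    (hcop : Nat.Coprime (Nat.card N₀) (Nat.card N₁))
    (hcomm : ∀ a ∈ N₀, ∀ b ∈ N₁, Commute a b) :
    ((H : Set G) * (N₀ : Set G)) ∩ ((H : Set G) * (N₁ : Set G)) = (H : Set G) := by
  apply Set.Subset.antisymm
  · rintro x ⟨⟨h, hh, a, ha, rfl⟩, k, hk, b, hb, heq⟩
    -- from h*a = k*b we get b*a⁻¹ = k⁻¹*h ∈ H
    have hc : b * a⁻¹ = k⁻¹ * h := by
      have h1 : k * b = h * a := heq
      calc b * a⁻¹ = k⁻¹ * (k * b) * a⁻¹ := by group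
        _ = k⁻¹ * (h * a) * a⁻¹ := by rw [h1]
        _ = k⁻¹ * h := by group
    have hcH : b * a⁻¹ ∈ H := hc ▸ H.mul_mem (H.inv_mem hk) hh
    set m := Nat.card N₁ with hm
    have hbm : b ^ m = 1 := by
      have : (⟨b, hb⟩ : N₁) ^ m = 1 := pow_card_eq_one'
      simpa using congrArg (Subtype.val) this
    have hcomm' : Commute b a⁻¹ := ((hcomm a ha b hb).symm).inv_right
    have hpow : (b * a⁻¹) ^ m = (a⁻¹) ^ m := by
      rw [hcomm'.mul_pow, hbm, one_mul]
    have hainv : (a⁻¹) ^ m ∈ H := hpow ▸ H.pow_mem hcH m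
    have ham : a ^ m ∈ H := by
      have := H.inv_mem hainv
      simpa using this
    -- coprimality: orderOf a ∣ Nat.card N₀, coprime to m
    have hd : orderOf a ∣ Nat.card N₀ := by
      have : orderOf (⟨a, ha⟩ : N₀) ∣ Nat.card N₀ := orderOf_dvd_natCard _
      simpa [orderOf_submonoid] using this
    set d := orderOf a with hdd
    have hco : Nat.Coprime m d := Nat.Coprime.coprime_dvd_right hd hcop.symm
    -- Bezout
    have hbez : (m : ℤ) * Nat.gcdA m d + (d : ℤ) * Nat.gcdB m d = 1 := by
      have := Nat.gcd_eq_gcd_ab m d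
      rw [hco.gcd_eq_one] at this
      push_cast at this
      linarith
    have haH : a ∈ H := by
      have hd1 : a ^ d = 1 := pow_orderOf_eq_one a
      have hkey : (m : ℤ) * Nat.gcdA m d = 1 - (d : ℤ) * Nat.gcdB m d := by linarith
      have h1 : (a ^ m) ^ Nat.gcdA m d = a := by
        calc (a ^ m) ^ Nat.gcdA m d = a ^ ((m : ℤ) * Nat.gcdA m d) := by
              rw [zpow_mul, zpow_natCast]
          _ = a ^ ((1 : ℤ) - (d : ℤ) * Nat.gcdB m d) := by rw [hkey]
          _ = a := by
              rw [zpow_sub, zpow_one, zpow_mul, zpow_natCast, hd1, one_zpow, inv_one, mul_one]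
      exact h1 ▸ H.zpow_mem ham _
    exact H.mul_mem hh haH
  · intro x hx
    exact ⟨⟨x, hx, 1, N₀.one_mem, mul_one x⟩, x, hx, 1, N₁.one_mem, mul_one x⟩
end

section
/- Let J and N be finite groups of coprime order with N nilpotent (hence solvable), and let J act on N by automorphisms. Then the first nonabelian cohomology set H¹(J, N) is trivial; equivalently, any two complements of N in N ⋊ J are conjugate by an element of N. -/
/-!
Induct on the nilpotency class through `N ⧸ center N`. If `f` is trivialised modulo the center
by `n`, then twisting `f` by `n` gives a cohomologous crossed homomorphism with values in the
characteristic abelian subgroup `center N`. There it is trivialised by averaging over `J`, which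
works because `|J|`-th powers are bijective on a group of order prime to `|J|`.
-/

open Subgroup QuotientGroup

def MulAut.quotientCharacteristic {G : Type*} [Group G] (H : Subgroup G) [H.Characteristic] :
    MulAut G →* MulAut (G ⧸ H) where
  toFun e := QuotientGroup.congr H H e (characteristic_iff_map_eq.mp ‹_› e)
  map_one' := by
    ext x
    induction x using induction_on
    rfl
  map_mul' _ _ := by
    ext x
    induction x using induction_on
    rfl

section CrossedHom

variable {J N M : Type*} [Group J] [Group N] [Group M]

def IsCrossedHom (φ : J →* MulAut N) (f : J → N) : Prop :=
  ∀ j j', f (j * j') = f j * φ j (f j')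

def IsCoboundary (φ : J →* MulAut N) (f : J → N) : Prop :=
  ∃ n : N, ∀ j, f j = n⁻¹ * φ j n

variable {φ : J →* MulAut N} {ψ : J →* MulAut M} {f : J → N}

lemma IsCrossedHom.map (hf : IsCrossedHom φ f) (α : N →* M)
    (hα : ∀ j x, α (φ j x) = ψ j (α x)) : IsCrossedHom ψ (α ∘ f) := by
  intro j j'
  simp only [Function.comp_apply, hf j j', map_mul, hα]

lemma IsCrossedHom.of_map {α : N →* M} (hinj : Function.Injective α)
    (hα : ∀ j x, α (φ j x) = ψ j (α x)) (hf : IsCrossedHom ψ (α ∘ f)) : IsCrossedHom φ f := by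
  intro j j'
  apply hinj
  simpa only [Function.comp_apply, map_mul, hα] using hf j j'

lemma IsCoboundary.map (hf : IsCoboundary φ f) (α : N →* M)
    (hα : ∀ j x, α (φ j x) = ψ j (α x)) : IsCoboundary ψ (α ∘ f) := by
  obtain ⟨n, hn⟩ := hf
  exact ⟨α n, fun j => by simp only [Function.comp_apply, hn j, map_mul, map_inv, hα]⟩

lemma IsCrossedHom.twist (hf : IsCrossedHom φ f) (n : N) :
    IsCrossedHom φ (fun j => n * f j * (φ j n)⁻¹) := by
  intro j j'
  simp only [hf j j', map_mul, map_inv, MulAut.mul_apply]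
  group

lemma IsCoboundary.of_twist {n : N} (h : IsCoboundary φ (fun j => n * f j * (φ j n)⁻¹)) :
    IsCoboundary φ f := by
  obtain ⟨m, hm⟩ := h
  refine ⟨m * n, fun j => ?_⟩
  have hj : n * f j * (φ j n)⁻¹ = m⁻¹ * φ j m := hm j
  rw [map_mul]
  calc f j = n⁻¹ * (n * f j * (φ j n)⁻¹) * φ j n := by group
    _ = (m * n)⁻¹ * (φ j m * φ j n) := by rw [hj]; group

/-- Averaging: with `S = ∏ j, f j`, the cocycle identity gives `f j ^ |J| = S * (φ j S)⁻¹`,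
so `f` is trivialised by the `|J|`-th root of `S⁻¹`. -/
lemma IsCrossedHom.isCoboundary_of_coprime [Finite J] [Finite N] [IsMulCommutative N]
    (hcop : (Nat.card J).Coprime (Nat.card N)) (hf : IsCrossedHom φ f) : IsCoboundary φ f := by
  let _ : CommGroup N := { mul_comm := mul_comm' }
  have := Fintype.ofFinite J
  set S := ∏ j : J, f j
  have hpow (j : J) : f j ^ Nat.card J = S * (φ j S)⁻¹ := by
    have hshift : ∏ j' : J, f (j * j') = S := Fintype.prod_equiv (Equiv.mulLeft j) _ f fun _ => rfl
    simp only [hf j, Finset.prod_mul_distrib, Finset.prod_const, ← map_prod] at hshift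
    rw [Finset.card_univ, ← Nat.card_eq_fintype_card] at hshift
    exact eq_mul_inv_of_mul_eq hshift
  let root := powCoprime hcop.symm
  set n := root.symm S⁻¹
  have hn : n ^ Nat.card J = S⁻¹ := root.apply_symm_apply _
  refine ⟨n, fun j => root.injective ?_⟩
  change f j ^ Nat.card J = (n⁻¹ * φ j n) ^ Nat.card J
  rw [hpow, mul_pow, inv_pow, ← map_pow (φ j), hn, map_inv, inv_inv]

lemma IsCrossedHom.isCoboundary_of_quotient {H : Subgroup N} [H.Characteristic]
    (hf : IsCrossedHom φ f)
    (hquot : IsCoboundary ((MulAut.quotientCharacteristic H).comp φ) fun j => (f j : N ⧸ H))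
    (hsub : ∀ g : J → H, IsCrossedHom ((MulAut.characteristic H).comp φ) g →
      IsCoboundary ((MulAut.characteristic H).comp φ) g) :
    IsCoboundary φ f := by
  obtain ⟨n', hn'⟩ := hquot
  obtain ⟨n, rfl⟩ := mk_surjective n'
  have hmem (j : J) : n * f j * (φ j n)⁻¹ ∈ H := by
    have hj : (f j : N ⧸ H) = (n : N ⧸ H)⁻¹ * φ j n := hn' j
    rw [← eq_one_iff, mk_mul, mk_mul, mk_inv, hj]
    group
  let g : J → H := fun j => ⟨_, hmem j⟩
  have hg : IsCrossedHom ((MulAut.characteristic H).comp φ) g :=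
    (hf.twist n).of_map (α := H.subtype) Subtype.val_injective fun _ _ => rfl
  exact ((hsub g hg).map H.subtype fun _ _ => rfl).of_twist

end CrossedHom

theorem IsCrossedHom.isCoboundary_of_isNilpotent {J N : Type*} [Group J] [Group N] [Finite J]
    [Finite N] [Group.IsNilpotent N] (hcop : (Nat.card J).Coprime (Nat.card N))
    {φ : J →* MulAut N} {f : J → N} (hf : IsCrossedHom φ f) : IsCoboundary φ f := by
  refine Group.nilpotent_center_quotient_ind (P := fun G _ _ => Finite G →
    (Nat.card J).Coprime (Nat.card G) → ∀ (φ : J →* MulAut G) (f : J → G),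
      IsCrossedHom φ f → IsCoboundary φ f) N ?_ ?_ ‹_› hcop φ f hf
  · intro G _ _ _ _ φ f _
    exact ⟨1, fun _ => Subsingleton.elim _ _⟩
  · intro G _ _ ih _ hcop φ f hf
    refine hf.isCoboundary_of_quotient (H := center G) ?_ fun g hg => hg.isCoboundary_of_coprime ?_
    · exact ih inferInstance (hcop.coprime_dvd_right (card_quotient_dvd_card _)) _ _
        (hf.map (mk' _) fun _ _ => rfl)
    · exact hcop.coprime_dvd_right (card_subgroup_dvd_card _)

/-- If `J` and `N` have coprime orders and `N` is nilpotent, then `H¹(J, N)` is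
trivial: every crossed homomorphism `J → N` is cohomologous to the trivial one. -/
theorem stmt_6 {N J : Type*} [Group N] [Group J] [Finite N] [Finite J]
    [Group.IsNilpotent N]
    (hcop : Nat.Coprime (Nat.card J) (Nat.card N))
    (φ : J →* MulAut N) (f : J → N)
    (hf : ∀ j j', f (j * j') = f j * φ j (f j')) :
    ∃ n : N, ∀ j, f j = n⁻¹ * φ j n :=
  IsCrossedHom.isCoboundary_of_isNilpotent hcop hf
end

section
/- Let J = J_q × J'_q be a finite nilpotent group (J_q the Sylow q-subgroup, J'_q the Hall q'-subgroup) acting on a finite q-group N by automorphisms, and let φ : J_q → N be a crossed homomorphism whose class is fixed by the J'_q-action. Then the map φ̃ : J → N defined by φ̃(j' j) = φ(j) for j ∈ J_q, j' ∈ J'_q (up to replacing φ by a cohomologous map) is a crossed homomorphism J → N extending a representative of the class of φ; in particular, the restriction res : H¹(J, N) → H¹(J_q, N)^{J'_q} is surjective. -/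
section

variable {N J : Type*} [Group N] [Group J] (φ : J →* MulAut N)

/-- Crossed homomorphism property. -/
def IsCocycle (f : J → N) : Prop := ∀ j j', f (j * j') = f j * φ j (f j')

/-- The cohomology relation. -/
def Cohomologous (f g : J → N) : Prop :=
  ∃ n : N, ∀ j, g j = n⁻¹ * f j * φ j n

end

/-!
Let `Γ = N ⋊ J'_q` act on maps `J_q → N`: `N` by twisting with coboundaries, `J'_q` by
post-composition (which preserves cocycles because `J'_q` centralizes `J_q`). The `N`-orbit of a
cocycle is its class, so invariance of the class of `f` says `N · Stab_Γ(f) = Γ`. By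
Schur–Zassenhaus, `N ∩ Stab_Γ(f)` has a complement in `Stab_Γ(f)`; it is also a complement of `N`
in `Γ`, hence conjugate to `J'_q`, because complements of a solvable normal Hall subgroup are
conjugate (by induction on `|N|`: conjugate modulo `[N, N]` by the abelian case, then inside the
preimage). So `J'_q` fixes a cocycle cohomologous to `f`, and a `J'_q`-fixed cocycle on `J_q`
extends to `J_q × J'_q` by ignoring the second coordinate.
-/

namespace Subgroup

variable {G G' : Type*} [Group G] [Group G'] {H K K₁ K₂ M : Subgroup G}

theorem IsComplement'.card_right_eq (h₁ : IsComplement' H K₁) (h₂ : IsComplement' H K₂) :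
    Nat.card K₁ = Nat.card K₂ :=
  h₁.symm.index_eq_card.symm.trans h₂.symm.index_eq_card

theorem IsComplement'.map_of_ker_le {f : G →* G'} (hf : Function.Surjective f) (hker : f.ker ≤ H)
    (h : IsComplement' H K) : IsComplement' (H.map f) (K.map f) := by
  refine isComplement'_of_disjoint_and_mul_eq_univ ?_ ?_
  · rw [disjoint_def]
    rintro _ ⟨x, hx, rfl⟩ ⟨k, hk, hkx⟩
    have hkH : k ∈ H := by
      simpa using H.mul_mem hx (hker (show x⁻¹ * k ∈ f.ker by simp [hkx]))
    rw [← hkx, disjoint_def.mp h.disjoint hkH hk, map_one]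
  · refine Set.eq_univ_of_forall fun y => ?_
    obtain ⟨g, rfl⟩ := hf y
    obtain ⟨⟨⟨x, hx⟩, ⟨k, hk⟩⟩, rfl⟩ := h.2 g
    exact ⟨f x, ⟨x, hx, rfl⟩, f k, ⟨k, hk, rfl⟩, (map_mul f x k).symm⟩

theorem IsComplement'.map_conj [H.Normal] (h : IsComplement' H K) (g : G) :
    IsComplement' H (K.map (MulAut.conj g).toMonoidHom) := by
  simpa [Normal.map_conj_eq] using
    h.map_of_ker_le (f := (MulAut.conj g).toMonoidHom) (MulAut.conj g).surjective
      (by rw [(MonoidHom.ker_eq_bot_iff _).mpr (MulAut.conj g).injective]; exact bot_le)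

theorem isComplement'_subgroupOf_sup [M.Normal] (h : Disjoint M K) :
    IsComplement' (M.subgroupOf (K ⊔ M)) (K.subgroupOf (K ⊔ M)) := by
  refine isComplement'_of_disjoint_and_mul_eq_univ ?_ ?_
  · rw [disjoint_def]
    intro x hM hK
    exact Subtype.ext (disjoint_def.mp h (mem_subgroupOf.mp hM) (mem_subgroupOf.mp hK))
  · refine Set.eq_univ_of_forall fun ⟨p, hp⟩ => ?_
    rw [← SetLike.mem_coe, sup_comm, normal_mul] at hp
    obtain ⟨m, hm, k, hk, rfl⟩ := hp
    exact ⟨⟨m, mem_sup_right hm⟩, hm, ⟨k, mem_sup_left hk⟩, hk, rfl⟩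

theorem card_subgroupOf_of_le {P : Subgroup G} (h : K ≤ P) :
    Nat.card (K.subgroupOf P) = Nat.card K :=
  Nat.card_congr (subgroupOfEquivOfLe h).toEquiv

theorem card_lt_card_of_lt [Finite G] (h : K₁ < K₂) : Nat.card K₁ < Nat.card K₂ :=
  (card_le_of_le h.le).lt_of_ne fun he => h.ne (eq_of_le_of_card_ge h.le he.ge)

theorem map_conj_map_conj (g h : G) :
    (K.map (MulAut.conj g).toMonoidHom).map (MulAut.conj h).toMonoidHom =
      K.map (MulAut.conj (h * g)).toMonoidHom := by
  rw [map_map, map_mul]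
  rfl

theorem eq_map_conj_of_subgroupOf_eq {P : Subgroup G} (h₁ : K₁ ≤ P) (h₂ : K₂ ≤ P) {p : P}
    (h : K₂.subgroupOf P = (K₁.subgroupOf P).map (MulAut.conj p).toMonoidHom) :
    K₂ = K₁.map (MulAut.conj (p : G)).toMonoidHom := by
  have hmap := congrArg (map P.subtype) h
  rwa [map_map, show P.subtype.comp (MulAut.conj p).toMonoidHom =
      (MulAut.conj (p : G)).toMonoidHom.comp P.subtype from rfl, ← map_map,
    subgroupOf_map_subtype, subgroupOf_map_subtype, inf_of_le_left h₁, inf_of_le_left h₂] at hmap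

theorem commutator_lt_of_not_isMulCommutative [Group.IsSolvable H] (h : ¬IsMulCommutative H) :
    ⁅H, H⁆ < H := by
  have : Nontrivial H := by
    contrapose! h
    exact ⟨⟨fun a b => Subsingleton.elim _ _⟩⟩
  rw [← H.range_subtype, MonoidHom.range_eq_map, ← map_commutator, map_subtype_lt_map_subtype]
  exact Group.IsSolvable.commutator_lt_top_of_nontrivial H

theorem isSolvable_subgroupOf_of_le [Group.IsSolvable H] {P : Subgroup G} (hKH : K ≤ H)
    (hKP : K ≤ P) : Group.IsSolvable (K.subgroupOf P) :=
  Group.isSolvable_of_isSolvable_injective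
    (f := (inclusion hKH).comp (subgroupOfEquivOfLe hKP).toMonoidHom)
    ((inclusion_injective hKH).comp (subgroupOfEquivOfLe hKP).injective)

variable [Finite G] [H.Normal]

theorem exists_stabilizer_quotientDiff_eq [IsMulCommutative H]
    (hcop : (Nat.card H).Coprime H.index) (hK : IsComplement' H K) :
    ∃ α : H.QuotientDiff, MulAction.stabilizer G α = K := by
  -- `K` is itself a transversal of `H`, and right multiplication by elements of `K` fixes it.
  refine ⟨Quotient.mk'' ⟨K, hK.symm⟩, (eq_of_le_of_card_ge (fun k hk => ?_)
    ((isComplement'_stabilizer_of_coprime hcop).card_right_eq hK).le).symm⟩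
  exact congrArg Quotient.mk'' (Subtype.ext (op_smul_coe_set (inv_mem hk)))

theorem exists_conj_eq_of_isComplement'_of_isMulCommutative [IsMulCommutative H]
    (hcop : (Nat.card H).Coprime H.index) (h₁ : IsComplement' H K₁) (h₂ : IsComplement' H K₂) :
    ∃ g : G, K₂ = K₁.map (MulAut.conj g).toMonoidHom := by
  obtain ⟨α, rfl⟩ := exists_stabilizer_quotientDiff_eq hcop h₁
  obtain ⟨β, rfl⟩ := exists_stabilizer_quotientDiff_eq hcop h₂
  obtain ⟨h, rfl⟩ := exists_smul_eq hcop α β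
  exact ⟨h, MulAction.stabilizer_smul_eq_stabilizer_map_conj (h : G) α⟩

theorem exists_conj_sup_eq_of_commutator_le [M.Normal] (hMH : M ≤ H) (hcomm : ⁅H, H⁆ ≤ M)
    (hcop : (Nat.card H).Coprime H.index) (h₁ : IsComplement' H K₁) (h₂ : IsComplement' H K₂) :
    ∃ g : G, K₁.map (MulAut.conj g).toMonoidHom ⊔ M = K₂ ⊔ M := by
  set π := QuotientGroup.mk' M
  have hπ : Function.Surjective π := QuotientGroup.mk'_surjective M
  have hker : π.ker ≤ H := by rwa [QuotientGroup.ker_mk']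
  have : IsMulCommutative (H.map π) := by
    refine ⟨⟨fun ⟨_, x, hx, hxy⟩ ⟨_, y, hy, hyx⟩ => Subtype.ext ?_⟩⟩
    subst hxy hyx
    refine commutatorElement_eq_one_iff_commute.mp ?_
    rw [← map_commutatorElement, QuotientGroup.mk'_apply, QuotientGroup.eq_one_iff]
    exact hcomm (commutator_mem_commutator hx hy)
  have hcop' : (Nat.card (H.map π)).Coprime (H.map π).index := by
    rw [index_map_eq H hπ hker]
    exact hcop.coprime_dvd_left (card_map_dvd H π)
  obtain ⟨x, hx⟩ := exists_conj_eq_of_isComplement'_of_isMulCommutative hcop'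
    (h₁.map_of_ker_le hπ hker) (h₂.map_of_ker_le hπ hker)
  obtain ⟨g, rfl⟩ := hπ x
  refine ⟨g, ?_⟩
  have hconj : π.comp (MulAut.conj g).toMonoidHom = (MulAut.conj (π g)).toMonoidHom.comp π := by
    ext; simp
  rw [← QuotientGroup.ker_mk' M, ← comap_map_eq, ← comap_map_eq, map_map, hconj, ← map_map, ← hx]

theorem exists_conj_eq_of_isComplement' [Group.IsSolvable H]
    (hcop : (Nat.card H).Coprime H.index) (h₁ : IsComplement' H K₁) (h₂ : IsComplement' H K₂) :
    ∃ g : G, K₂ = K₁.map (MulAut.conj g).toMonoidHom := by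
  induction hn : Nat.card H using Nat.strong_induction_on generalizing G with
  | _ n ih =>
  by_cases hcomm : IsMulCommutative H
  · exact exists_conj_eq_of_isComplement'_of_isMulCommutative hcop h₁ h₂
  have hMH := commutator_lt_of_not_isMulCommutative hcomm
  obtain ⟨g, hg⟩ := exists_conj_sup_eq_of_commutator_le hMH.le le_rfl hcop h₁ h₂
  set M := ⁅H, H⁆
  set P := K₂ ⊔ M
  have hMP : M ≤ P := le_sup_right
  have hLP : K₁.map (MulAut.conj g).toMonoidHom ≤ P := hg ▸ le_sup_left
  have hK₂ : IsComplement' (M.subgroupOf P) (K₂.subgroupOf P) :=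
    isComplement'_subgroupOf_sup (h₂.disjoint.mono_left hMH.le)
  have hcopP : (Nat.card (M.subgroupOf P)).Coprime (M.subgroupOf P).index := by
    rw [hK₂.symm.index_eq_card, card_subgroupOf_of_le hMP, card_subgroupOf_of_le le_sup_left,
      ← h₂.symm.index_eq_card]
    exact hcop.coprime_dvd_left (card_dvd_of_le hMH.le)
  have := isSolvable_subgroupOf_of_le hMH.le hMP
  obtain ⟨p, hp⟩ := ih _ (by rw [← hn, card_subgroupOf_of_le hMP]; exact card_lt_card_of_lt hMH)
    hcopP (hg ▸ isComplement'_subgroupOf_sup ((h₁.map_conj g).disjoint.mono_left hMH.le)) hK₂ rfl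
  exact ⟨p * g, (eq_map_conj_of_subgroupOf_eq hLP le_sup_left hp).trans (map_conj_map_conj g p)⟩

/-- Glauberman's lemma, phrased inside the group `G = H ⋊ A`. -/
theorem exists_le_stabilizer_smul_of_isComplement' {X : Type*} [MulAction G X] {A : Subgroup G}
    [Group.IsSolvable H] (hcop : (Nat.card H).Coprime H.index) (hA : IsComplement' H A) {x : X}
    (hx : H ⊔ MulAction.stabilizer G x = ⊤) :
    ∃ h ∈ H, A ≤ MulAction.stabilizer G (h • x) := by
  set S := MulAction.stabilizer G x
  have hindex : (H.subgroupOf S).index = H.index := by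
    rw [← relIndex, ← relIndex_sup_left, hx, relIndex_top_right]
  have hcopS : (Nat.card (H.subgroupOf S)).Coprime (H.subgroupOf S).index := by
    rw [hindex, ← card_subtype, subgroupOf_map_subtype]
    exact hcop.coprime_dvd_left (card_dvd_of_le inf_le_left)
  obtain ⟨K, hK⟩ := exists_right_complement'_of_coprime hcopS
  set B := K.map S.subtype
  have hB : IsComplement' H B := by
    refine isComplement'_of_card_mul_and_disjoint ?_ ?_
    · rw [card_subtype, ← hK.symm.index_eq_card, hindex, card_mul_index]
    · rw [disjoint_def]
      rintro _ hH ⟨k, hk, rfl⟩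
      rw [disjoint_def.mp hK.disjoint (mem_subgroupOf.mpr hH) hk, map_one]
  obtain ⟨g, rfl⟩ := exists_conj_eq_of_isComplement' hcop hB hA
  obtain ⟨h, hh, s, hs, rfl⟩ := mem_sup_of_normal_left.mp (hx ▸ mem_top g : g ∈ H ⊔ S)
  refine ⟨h, hh, ?_⟩
  rw [← MulAction.mem_stabilizer_iff.mp hs, ← mul_smul,
    MulAction.stabilizer_smul_eq_stabilizer_map_conj]
  exact map_mono (map_subtype_le K)

end Subgroup

theorem IsCocycle.of_cohomologous {N J : Type*} [Group N] [Group J] {φ : J →* MulAut N}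
    {f g : J → N} (hf : IsCocycle φ f) (hfg : Cohomologous φ f g) : IsCocycle φ g := by
  obtain ⟨n, hn⟩ := hfg
  intro j j'
  simp only [hn, hf j j', map_mul, MulAut.mul_apply, map_inv]
  group

theorem Cohomologous.symm {N J : Type*} [Group N] [Group J] {φ : J →* MulAut N}
    {f g : J → N} (hfg : Cohomologous φ f g) : Cohomologous φ g f := by
  obtain ⟨n, hn⟩ := hfg
  refine ⟨n⁻¹, fun j => ?_⟩
  rw [hn, map_inv]
  group

theorem IsCocycle.comp_fst {N J₁ J₂ : Type*} [Group N] [Group J₁] [Group J₂]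
    {φ : J₁ × J₂ →* MulAut N} {f : J₁ → N} (hf : IsCocycle (φ.comp (MonoidHom.inl J₁ J₂)) f)
    (hfix : ∀ (j : J₂) (x : J₁), φ (1, j) (f x) = f x) :
    IsCocycle φ (fun p => f p.1) := by
  rintro ⟨a₁, a₂⟩ ⟨b₁, b₂⟩
  have hsplit : φ (a₁, a₂) = φ (a₁, 1) * φ (1, a₂) := by rw [← map_mul, Prod.mk_mul_mk]; simp
  show f (a₁ * b₁) = f a₁ * φ (a₁, a₂) (f b₁)
  rw [hsplit, MulAut.mul_apply, hfix]
  exact hf a₁ b₁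

theorem apply_inr_apply_inl_comm {N J₁ J₂ : Type*} [Group N] [Group J₁] [Group J₂]
    (φ : J₁ × J₂ →* MulAut N) (j₁ : J₁) (j₂ : J₂) (n : N) :
    φ (1, j₂) (φ (j₁, 1) n) = φ (j₁, 1) (φ (1, j₂) n) := by
  rw [← MulAut.mul_apply, ← map_mul, ← MulAut.mul_apply, ← map_mul, Prod.mk_mul_mk,
    Prod.mk_mul_mk, one_mul, mul_one, one_mul, mul_one]

namespace SemidirectProduct

open Subgroup

variable {N G : Type*} [Group N] [Group G] {ψ : G →* MulAut N}

theorem isComplement'_ker_rightHom_range_inr :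
    IsComplement' (rightHom : N ⋊[ψ] G →* G).ker (inr : G →* N ⋊[ψ] G).range := by
  refine isComplement'_of_disjoint_and_mul_eq_univ ?_ ?_
  · rw [disjoint_def]
    rintro _ hx ⟨g, rfl⟩
    rw [MonoidHom.mem_ker, rightHom_inr] at hx
    rw [hx, map_one]
  · refine Set.eq_univ_of_forall fun γ => ?_
    exact ⟨inl γ.left, rightHom_inl γ.left, inr γ.right, ⟨γ.right, rfl⟩, inl_left_mul_inr_right γ⟩

theorem card_ker_rightHom : Nat.card (rightHom : N ⋊[ψ] G →* G).ker = Nat.card N := by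
  rw [← range_inl_eq_ker_rightHom]
  exact Nat.card_congr (MonoidHom.ofInjective inl_injective).toEquiv.symm

theorem index_ker_rightHom : (rightHom : N ⋊[ψ] G →* G).ker.index = Nat.card G := by
  rw [index_ker, MonoidHom.range_eq_top.mpr rightHom_surjective, card_top]

variable {J₁ J₂ : Type*} [Group J₁] [Group J₂] (φ : J₁ × J₂ →* MulAut N)

instance : MulAction (N ⋊[φ.comp (MonoidHom.inr J₁ J₂)] J₂) (J₁ → N) where
  smul γ f x := γ.left * φ (1, γ.right) (f x) * (φ (x, 1) γ.left)⁻¹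
  one_smul f := by
    funext x
    show 1 * φ (1, 1) (f x) * (φ (x, 1) 1)⁻¹ = f x
    simp [Prod.mk_one_one]
  mul_smul γ₁ γ₂ f := by
    funext x
    show (γ₁ * γ₂).left * φ (1, (γ₁ * γ₂).right) (f x) * (φ (x, 1) (γ₁ * γ₂).left)⁻¹ =
      γ₁.left * φ (1, γ₁.right) (γ₂.left * φ (1, γ₂.right) (f x) * (φ (x, 1) γ₂.left)⁻¹) *
        (φ (x, 1) γ₁.left)⁻¹
    have hmul : ((1 : J₁), γ₁.right * γ₂.right) = (1, γ₁.right) * (1, γ₂.right) := by simp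
    simp only [mul_left, mul_right, MonoidHom.comp_apply, MonoidHom.inr_apply, hmul, map_mul,
      MulAut.mul_apply, map_inv, apply_inr_apply_inl_comm]
    group

variable {φ}

theorem inl_smul (n : N) (f : J₁ → N) :
    (inl n : N ⋊[φ.comp (MonoidHom.inr J₁ J₂)] J₂) • f = fun x => n * f x * (φ (x, 1) n)⁻¹ := by
  funext x
  show n * φ (1, 1) (f x) * _ = _
  simp [Prod.mk_one_one]

theorem inr_smul (j : J₂) (f : J₁ → N) :
    (inr j : N ⋊[φ.comp (MonoidHom.inr J₁ J₂)] J₂) • f = fun x => φ (1, j) (f x) := by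
  funext x
  show 1 * φ (1, j) (f x) * (φ (x, 1) 1)⁻¹ = _
  simp

theorem cohomologous_iff_exists_inl_smul_eq {f g : J₁ → N} :
    Cohomologous (φ.comp (MonoidHom.inl J₁ J₂)) f g ↔
      ∃ n : N, (inl n : N ⋊[φ.comp (MonoidHom.inr J₁ J₂)] J₂) • f = g := by
  simp only [Cohomologous, inl_smul, funext_iff, MonoidHom.comp_apply, MonoidHom.inl_apply]
  refine ⟨fun ⟨n, hn⟩ => ⟨n⁻¹, fun x => ?_⟩, fun ⟨n, hn⟩ => ⟨n⁻¹, fun x => ?_⟩⟩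
  · rw [hn, map_inv, inv_inv]
  · rw [← hn, map_inv, inv_inv]

end SemidirectProduct

section

open Subgroup SemidirectProduct

variable {N J₁ J₂ : Type*} [Group N] [Group J₁] [Group J₂] {φ : J₁ × J₂ →* MulAut N}
  {f : J₁ → N}

theorem sup_stabilizer_eq_top_of_cohomologous
    (hinv : ∀ j : J₂, Cohomologous (φ.comp (MonoidHom.inl J₁ J₂)) (fun x => φ (1, j) (f x)) f) :
    (rightHom : N ⋊[φ.comp (MonoidHom.inr J₁ J₂)] J₂ →* J₂).ker ⊔ MulAction.stabilizer _ f = ⊤ := by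
  refine eq_top_iff.mpr fun γ _ => ?_
  rw [← inl_left_mul_inr_right γ]
  refine mul_mem (mem_sup_left (rightHom_inl γ.left)) ?_
  obtain ⟨n, hn⟩ := cohomologous_iff_exists_inl_smul_eq.mp (inr_smul γ.right f ▸ hinv γ.right)
  have hmem : (inl n * inr γ.right : N ⋊[φ.comp (MonoidHom.inr J₁ J₂)] J₂) ∈
      MulAction.stabilizer _ f := by
    rw [MulAction.mem_stabilizer_iff, mul_smul, hn]
  rw [← inv_mul_cancel_left (inl n) (inr γ.right)]
  exact mul_mem (mem_sup_left (inv_mem (MonoidHom.mem_ker.mpr (rightHom_inl n))))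
    (mem_sup_right hmem)

theorem exists_cohomologous_forall_apply_eq [Finite N] [Finite J₂] [Group.IsSolvable N]
    (hcop : (Nat.card N).Coprime (Nat.card J₂))
    (hinv : ∀ j : J₂, Cohomologous (φ.comp (MonoidHom.inl J₁ J₂)) (fun x => φ (1, j) (f x)) f) :
    ∃ g : J₁ → N, Cohomologous (φ.comp (MonoidHom.inl J₁ J₂)) f g ∧
      ∀ (j : J₂) (x : J₁), φ (1, j) (g x) = g x := by
  let Γ := N ⋊[φ.comp (MonoidHom.inr J₁ J₂)] J₂
  have : Finite Γ := Finite.of_equiv _ equivProd.symm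
  have : Group.IsSolvable (rightHom : Γ →* J₂).ker := by
    rw [← range_inl_eq_ker_rightHom]
    exact Group.isSolvable_of_surjective (MonoidHom.rangeRestrict_surjective _)
  obtain ⟨_, hn, hfix⟩ := exists_le_stabilizer_smul_of_isComplement'
    (by rwa [card_ker_rightHom, index_ker_rightHom]) isComplement'_ker_rightHom_range_inr
    (sup_stabilizer_eq_top_of_cohomologous hinv)
  obtain ⟨n, rfl⟩ := range_inl_eq_ker_rightHom.ge hn
  refine ⟨(inl n : Γ) • f, cohomologous_iff_exists_inl_smul_eq.mpr ⟨n, rfl⟩, fun j x => ?_⟩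
  have hj := hfix ⟨j, rfl⟩
  rw [MulAction.mem_stabilizer_iff, inr_smul] at hj
  exact congrFun hj x

end

theorem stmt_17_general {Jq Jq' N : Type*} [Group Jq] [Group Jq'] [Group N]
    [Finite Jq'] [Finite N]
    (q : ℕ) (hq : q.Prime) (hJq' : ¬ q ∣ Nat.card Jq')
    (hN : IsPGroup q N)
    (φ : Jq × Jq' →* MulAut N) (f : Jq → N)
    (hf : IsCocycle (φ.comp (MonoidHom.inl Jq Jq')) f)
    (hinv : ∀ j' : Jq', Cohomologous (φ.comp (MonoidHom.inl Jq Jq'))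
      (fun x => φ (1, j') (f x)) f) :
    ∃ F : Jq × Jq' → N, IsCocycle φ F ∧
      Cohomologous (φ.comp (MonoidHom.inl Jq Jq')) (fun x => F (x, 1)) f := by
  have : Fact q.Prime := ⟨hq⟩
  have := hN.isNilpotent
  obtain ⟨k, hk⟩ := IsPGroup.iff_card.mp hN
  have hcop : (Nat.card N).Coprime (Nat.card Jq') :=
    hk ▸ ((Nat.Prime.coprime_iff_not_dvd hq).mpr hJq').pow_left k
  obtain ⟨g, hfg, hfix⟩ := exists_cohomologous_forall_apply_eq hcop hinv
  exact ⟨fun p => g p.1, (hf.of_cohomologous hfg).comp_fst hfix, hfg.symm⟩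

/-- For nilpotent `J = J_q × J'_q` acting on a finite `q`-group `N`, any crossed
homomorphism `φ : J_q → N` whose class is fixed by the `J'_q`-action extends (up to
cohomology) to a crossed homomorphism `J → N`; in particular
`res : H¹(J, N) → H¹(J_q, N)^{J'_q}` is surjective. -/
theorem stmt_17 {Jq Jq' N : Type*} [Group Jq] [Group Jq'] [Group N]
    [Finite Jq] [Finite Jq'] [Finite N]
    (q : ℕ) (hq : q.Prime) (hJq : IsPGroup q Jq) (hJq' : ¬ q ∣ Nat.card Jq')
    [Group.IsNilpotent Jq'] (hN : IsPGroup q N)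
    (φ : Jq × Jq' →* MulAut N) (f : Jq → N)
    (hf : IsCocycle (φ.comp (MonoidHom.inl Jq Jq')) f)
    (hinv : ∀ j' : Jq', Cohomologous (φ.comp (MonoidHom.inl Jq Jq'))
      (fun x => φ (1, j') (f x)) f) :
    ∃ F : Jq × Jq' → N, IsCocycle φ F ∧
      Cohomologous (φ.comp (MonoidHom.inl Jq Jq')) (fun x => F (x, 1)) f :=
  stmt_17_general q hq hJq' hN φ f hf hinv
end

section
/- Let G be a finite group acting on a nonempty set Ω with an abelian normal subgroup N ≤ G acting transitively, such that N has a complement J in G. If for every prime p some Sylow p-subgroup of J fixes a point of Ω, then J fixes a point of Ω. -/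
theorem aux_cor {𝒥 A : Type*} [Group 𝒥] [Finite 𝒥] [CommGroup A]
    (ρ : 𝒥 → (A →* A)) (hρ : ∀ j k a, ρ (j * k) a = ρ j (ρ k a))
    (c : 𝒥 → A) (hc : ∀ j k, c (j * k) = ρ j (c k) * c j)
    (P : Subgroup 𝒥) (a : A) (ha : ∀ s ∈ P, c s = a * (ρ s a)⁻¹) :
    ∃ m : A, ∀ j, c j ^ P.index = m * (ρ j m)⁻¹ := by
  classical
  set F : 𝒥 → A := fun t => c t * ρ t a with hF
  have hconst : ∀ t s, s ∈ P → F (t * s) = F t := by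
    intro t s hs
    have hsa : c s * ρ s a = a := by rw [ha s hs, inv_mul_cancel_right]
    calc F (t * s) = (ρ t (c s) * c t) * ρ t (ρ s a) := by rw [hF]; simp only [hc, hρ]
      _ = ρ t (c s) * ρ t (ρ s a) * c t := mul_right_comm _ _ _
      _ = ρ t (c s * ρ s a) * c t := by rw [map_mul]
      _ = c t * ρ t a := by rw [hsa, mul_comm]
  set Fbar : 𝒥 ⧸ P → A :=
    Quotient.lift F (fun t u h => by
      have h' : t⁻¹ * u ∈ P := QuotientGroup.leftRel_apply.mp h
      have := hconst t (t⁻¹ * u) h'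
      rw [mul_inv_cancel_left] at this; exact this.symm ) with hFbar
  letI : Fintype (𝒥 ⧸ P) := Fintype.ofFinite _
  set m : A := ∏ q : 𝒥 ⧸ P, Fbar q with hm
  refine ⟨m, fun j => ?_⟩
  have hkey : ∀ q : 𝒥 ⧸ P, ρ j (Fbar q) = Fbar (j • q) * (c j)⁻¹ := by
    intro q
    induction q using QuotientGroup.induction_on with
    | H t =>
      have h1 : Fbar (t : 𝒥 ⧸ P) = F t := rfl
      have h2 : (j • (t : 𝒥 ⧸ P)) = ((j * t : 𝒥) : 𝒥 ⧸ P) := rfl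
      have h3 : Fbar ((j * t : 𝒥) : 𝒥 ⧸ P) = F (j * t) := rfl
      have h4 : ρ j (c t) = c (j * t) * (c j)⁻¹ := by rw [hc, mul_inv_cancel_right]
      rw [h1, h2, h3, hF]
      simp only [map_mul, h4, ← hρ]
      exact mul_right_comm _ _ _
  have hρm : ρ j m = m * ((c j)⁻¹) ^ P.index := by
    rw [hm, map_prod]
    calc ∏ q : 𝒥 ⧸ P, ρ j (Fbar q) = ∏ q : 𝒥 ⧸ P, (Fbar (j • q) * (c j)⁻¹) := by
          simp only [hkey]
      _ = (∏ q : 𝒥 ⧸ P, Fbar (j • q)) * ((c j)⁻¹) ^ (Fintype.card (𝒥 ⧸ P)) := by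
          rw [Finset.prod_mul_distrib, Finset.prod_const, Finset.card_univ]
      _ = m * ((c j)⁻¹) ^ P.index := by
          rw [show (∏ q : 𝒥 ⧸ P, Fbar (j • q)) = ∏ q : 𝒥 ⧸ P, Fbar q from
            Fintype.prod_equiv (MulAction.toPerm j) _ _ (fun q => rfl),
            Subgroup.index_eq_card, Nat.card_eq_fintype_card]
  rw [hρm, mul_inv, inv_pow, inv_inv, mul_inv_cancel_left]

/-- Abelian analogue of Theorem 4: if a finite group `G` acts on a nonempty set `Ω`
with an abelian normal subgroup `N` acting transitively and complemented by `J`,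
and for each prime `p` some Sylow `p`-subgroup of `J` fixes a point of `Ω`, then
`J` fixes a point of `Ω`. -/
theorem stmt_18 {G : Type*} [Group G] [Finite G] (Ω : Type*) [Nonempty Ω]
    [MulAction G Ω] (N J : Subgroup G) [N.Normal]
    (habel : ∀ a ∈ N, ∀ b ∈ N, a * b = b * a)
    (htrans : ∀ α β : Ω, ∃ n ∈ N, n • α = β)
    (hcompl : Subgroup.IsComplement' N J)
    (hp : ∀ p : ℕ, p.Prime → ∃ (P : Sylow p J) (ω : Ω),
      ∀ j : J, j ∈ (P : Subgroup J) → (j : G) • ω = ω) :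
    ∃ ω : Ω, ∀ j ∈ J, j • ω = ω := by
  classical
  obtain ⟨ω₀⟩ := ‹Nonempty Ω›
  -- N is commutative
  letI : CommGroup ↥N :=
    { (inferInstance : Group ↥N) with
      mul_comm := fun a b => Subtype.ext (habel a a.2 b b.2) }
  -- elements of N fixing ω₀ fix everything
  have fixall : ∀ n : ↥N, (n : G) • ω₀ = ω₀ → ∀ β : Ω, (n : G) • β = β := by
    intro n hn β
    obtain ⟨a, haN, haβ⟩ := htrans ω₀ β
    rw [← haβ, ← mul_smul, habel (n : G) n.2 a haN, mul_smul, hn]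
  set stab : Subgroup ↥N := (MulAction.stabilizer G ω₀).comap N.subtype with hstab
  have mem_stab : ∀ n : ↥N, n ∈ stab ↔ (n : G) • ω₀ = ω₀ := fun n => Iff.rfl
  set A := ↥N ⧸ stab with hA
  set π : ↥N →* A := QuotientGroup.mk' stab with hπ
  have key_iff : ∀ n n' : ↥N, π n = π n' ↔ (n : G) • ω₀ = (n' : G) • ω₀ := by
    intro n n'
    rw [hπ, QuotientGroup.mk'_eq_mk']
    constructor
    · rintro ⟨z, hz, rfl⟩
      have : (z : G) • ω₀ = ω₀ := hz
      push_cast [mul_smul]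
      rw [this]
    · intro h
      refine ⟨n⁻¹ * n', ?_, by group⟩
      rw [mem_stab]
      push_cast [mul_smul]
      rw [← h, ← mul_smul]
      simp
  -- conjugation homomorphism
  have conj_mem : ∀ (g : G) (n : ↥N), g * (n : G) * g⁻¹ ∈ N :=
    fun g n => Subgroup.Normal.conj_mem ‹N.Normal› n n.2 g
  set conjN : G → ↥N →* ↥N := fun g =>
    { toFun := fun n => ⟨g * n * g⁻¹, conj_mem g n⟩
      map_one' := by ext; simp
      map_mul' := fun n n' => by ext; push_cast; group } with hconjN
  -- the action of G on A
  have hwd : ∀ g : G, ∀ n ∈ stab, π (conjN g n) = 1 := by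
    intro g n hn
    rw [hπ, QuotientGroup.mk'_apply, QuotientGroup.eq_one_iff, mem_stab]
    show (g * n * g⁻¹) • ω₀ = ω₀
    rw [mul_smul, mul_smul, fixall n hn, ← mul_smul, mul_inv_cancel, one_smul]
  set φ : G → A →* A := fun g =>
    QuotientGroup.lift stab (π.comp (conjN g)) (hwd g) with hφ
  have φ_mk : ∀ (g : G) (n : ↥N), φ g (π n) = π (conjN g n) := fun g n => rfl
  have φ_mul : ∀ (g h : G) (a : A), φ (g * h) a = φ g (φ h a) := by
    intro g h a
    induction a using QuotientGroup.induction_on with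
    | H n =>
      show φ (g * h) (π n) = φ g (φ h (π n))
      rw [φ_mk, φ_mk, φ_mk]
      congr 1
      ext
      show (g * h) * n * (g * h)⁻¹ = g * (h * n * h⁻¹) * g⁻¹
      group
  -- the cocycle
  have hν := fun j : ↥J => htrans ω₀ ((j : G) • ω₀)
  choose ν hνN hνeq using hν
  set ν' : ↥J → ↥N := fun j => ⟨ν j, hνN j⟩ with hν'
  set c : ↥J → A := fun j => π (ν' j) with hc'
  have hc : ∀ j k : ↥J, c (j * k) = φ (j : G) (c k) * c j := by
    intro j k
    rw [hc', φ_mk, ← map_mul, key_iff]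
    have h1 : ((ν' (j * k) : G)) • ω₀ = ((j * k : ↥J) : G) • ω₀ := hνeq (j * k)
    rw [h1]
    have e1 : ((conjN ↑j (ν' k) * ν' j : ↥N) : G)
        = (j : G) * ((ν k) * ((j : G)⁻¹ * ν j)) := by
      show ((j : G) * ν k * (j : G)⁻¹) * ν j = _
      group
    rw [e1, mul_smul, mul_smul, mul_smul, hνeq j, inv_smul_smul, hνeq k, ← mul_smul]
    norm_cast
  -- fixed point criterion
  have crit : ∀ (n : ↥N) (j : ↥J),
      ((j : G) • ((n : G) • ω₀) = (n : G) • ω₀) ↔ c j = π n * (φ (j : G) (π n))⁻¹ := by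
    intro n j
    have e1 : (j : G) • ((n : G) • ω₀) = ((conjN (j : G) n * ν' j : ↥N) : G) • ω₀ := by
      have e2 : ((conjN (j : G) n * ν' j : ↥N) : G)
          = (j : G) * ((n : G) * ((j : G)⁻¹ * ν j)) := by
        show ((j : G) * (n : G) * (j : G)⁻¹) * ν j = _
        group
      rw [e2, mul_smul, mul_smul, mul_smul, hνeq j, inv_smul_smul]
    rw [e1, ← key_iff, map_mul, φ_mk, eq_mul_inv_iff_mul_eq]
    exact ⟨fun h => by rw [← h]; exact mul_comm _ _,
      fun h => by rw [← h]; exact mul_comm _ _⟩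
  -- the subgroup of exponents k such that c^k is a coboundary
  set D : AddSubgroup ℤ :=
    { carrier := {k : ℤ | ∃ m : A, ∀ j : ↥J, c j ^ k = m * (φ (j : G) m)⁻¹}
      zero_mem' := ⟨1, fun j => by simp⟩
      add_mem' := fun {k l} hk hl => by
        obtain ⟨m₁, h₁⟩ := hk
        obtain ⟨m₂, h₂⟩ := hl
        exact ⟨m₁ * m₂, fun j => by
          rw [zpow_add, h₁ j, h₂ j, map_mul, mul_inv, mul_mul_mul_comm]⟩
      neg_mem' := fun {k} hk => by
        obtain ⟨m, h⟩ := hk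
        exact ⟨m⁻¹, fun j => by
          rw [zpow_neg, h j, map_inv, mul_inv, inv_inv, mul_comm]⟩ } with hD
  have mem_D : ∀ k : ℤ, k ∈ D ↔ ∃ m : A, ∀ j : ↥J, c j ^ k = m * (φ (j : G) m)⁻¹ :=
    fun k => Iff.rfl
  have hρmul : ∀ (j k : ↥J) (a : A), φ ((j * k : ↥J) : G) a = φ (j : G) (φ (k : G) a) :=
    fun j k a => φ_mul (j : G) (k : G) a
  -- index of any subgroup with a coboundary restriction lies in D
  have index_mem : ∀ (P : Subgroup ↥J) (a : A),
      (∀ s ∈ P, c s = a * (φ (s : G) a)⁻¹) → (P.index : ℤ) ∈ D := by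
    intro P a ha
    obtain ⟨m, hm⟩ := aux_cor (fun j : ↥J => φ (j : G)) hρmul c hc P a ha
    exact ⟨m, fun j => by rw [zpow_natCast]; exact hm j⟩
  -- the order of J lies in D (take P = ⊥)
  have c_one : c 1 = 1 := by
    have : π (ν' 1) = π 1 := by
      rw [key_iff]
      have := hνeq 1
      simpa using this
    simpa [hc'] using this
  have card_mem : ((Nat.card ↥J : ℕ) : ℤ) ∈ D := by
    rw [← Subgroup.index_bot]
    refine index_mem ⊥ 1 ?_
    intro s hs
    rw [Subgroup.mem_bot] at hs
    subst hs
    rw [c_one, map_one, inv_one, mul_one]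
  -- each Sylow index lies in D
  have sylow_mem : ∀ p : ℕ, p.Prime →
      ∃ P : Sylow p ↥J, (((P : Subgroup ↥J).index : ℕ) : ℤ) ∈ D := by
    intro p pp
    obtain ⟨P, ω, hfix⟩ := hp p pp
    obtain ⟨np, hnpN, hnpeq⟩ := htrans ω₀ ω
    refine ⟨P, index_mem (P : Subgroup ↥J) (π ⟨np, hnpN⟩) ?_⟩
    intro s hs
    exact (crit ⟨np, hnpN⟩ s).mp (by rw [hnpeq]; exact hfix s hs)
  -- D contains 1
  have one_mem : (1 : ℤ) ∈ D := by
    obtain ⟨d, hd⟩ := Int.subgroup_cyclic D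
    have mem_iff : ∀ k : ℤ, k ∈ D ↔ d ∣ k := by
      intro k
      rw [hd, AddSubgroup.mem_closure_singleton]
      constructor
      · rintro ⟨z, rfl⟩; exact Dvd.intro_left z rfl
      · rintro ⟨z, rfl⟩; exact ⟨z, mul_comm _ _⟩
    have hdJ : d ∣ (Nat.card ↥J : ℤ) := (mem_iff _).mp card_mem
    have hd0 : d ≠ 0 := by
      rintro rfl
      rw [zero_dvd_iff] at hdJ
      have : Nat.card ↥J ≠ 0 := Nat.card_pos.ne'
      exact_mod_cast this (by exact_mod_cast hdJ)
    have habs : d.natAbs = 1 := by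
      by_contra h1
      obtain ⟨p, pp, hpd⟩ := Nat.exists_prime_and_dvd h1
      haveI : Fact p.Prime := ⟨pp⟩
      obtain ⟨P, hPmem⟩ := sylow_mem p pp
      have hdvd : d ∣ ((P : Subgroup ↥J).index : ℤ) := (mem_iff _).mp hPmem
      have : p ∣ (P : Subgroup ↥J).index := by
        have := Int.natAbs_dvd_natAbs.mpr hdvd
        rw [Int.natAbs_natCast] at this
        exact hpd.trans this
      exact P.not_dvd_index this
    rw [mem_iff]
    exact Int.natAbs_dvd.mp (by rw [habs]; exact one_dvd _)
  -- extract the coboundary and conclude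
  obtain ⟨m, hm⟩ := (mem_D 1).mp one_mem
  obtain ⟨n, hn⟩ := QuotientGroup.mk'_surjective stab m
  refine ⟨(n : G) • ω₀, fun j hj => ?_⟩
  have := hm ⟨j, hj⟩
  rw [zpow_one] at this
  exact (crit n ⟨j, hj⟩).mpr (by rw [hn]; exact this)
end
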